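/- Let β, m, L > 0, let 0 ≤ γ < 1/2, and let ε ∈ ℝ satisfy 2ε < (βm²)^{1−γ}. Set θ_j = β((2πj/L)² + m²) for j ∈ ℤ. Then the series S(ξ) = (1/2) Σ_{j∈ℤ} log[(1 − 2ε θ_j^{γ−1})² + 4ξ² θ_j^{−2}] converges absolutely for every ξ ∈ ℝ, and there exist finite constants K₁ and K₂ > 0 depending only on γ, ε, β, L and m (not on ξ) such that S(ξ) ≥ −K₁ + K₂ √(max(|ξ|−1, 0)) for all ξ ∈ ℝ. -/

import Mathlib

/-! Write `θ_j = q j² + M`, `a_j = 1 - 2ε θ_j^(γ-1)` and `b_j = θ_j^(-2)`. Since `θ_j` grows like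
`j²` and `2(1 - γ) > 1`, both `a_j - 1` and `b_j` are summable, so each term
`log (a_j² + 4ξ² b_j) = log (1 + (summable))` is summable. The hypothesis on `ε` gives `a_j > 0`,
and `a_j → 1` bounds `a_j ≤ C`; hence every term of `S(ξ) - S(0)` is nonnegative and is at least
`log (1 + 1/C²)` as soon as `θ_j ≤ 2|ξ|`, which holds for about `√|ξ|` indices `j`. -/

open Real Filter Finset Topology

section LogSeries

variable {ι : Type*} {a b : ι → ℝ}

lemma summable_log_sq_add_mul (ha : Summable fun i => a i - 1) (hb : Summable b) (t : ℝ) :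
    Summable fun i => log (a i ^ 2 + t * b i) := by
  have hsq : Summable fun i => a i ^ 2 - 1 := by
    have h2 : Tendsto (fun i => a i - 1 + 2) cofinite (𝓝 2) := by
      simpa using ha.tendsto_cofinite_zero.add_const 2
    have hnorm : Summable fun i => ‖a i - 1‖ := by simpa only [Real.norm_eq_abs] using ha.abs
    refine (hnorm.mul_tendsto_const h2).congr fun i => ?_
    ring
  refine (summable_log_one_add_of_summable (hsq.add (hb.mul_left t))).congr fun i => ?_
  ring_nf

lemma log_one_add_div_sq_le_log_sub_log {x y α C : ℝ} (hα : 0 < α) (hαC : α ≤ C)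
    (hx : 0 ≤ x) (hxy : x ≤ y) :
    log (1 + x / C ^ 2) ≤ log (α ^ 2 + y) - log (α ^ 2) := by
  have hy : 0 ≤ y := hx.trans hxy
  rw [← log_div (by positivity) (by positivity), add_div, div_self (by positivity)]
  gcongr

lemma exists_pos_card_mul_le_tsum_log_sub (ha0 : ∀ i, 0 < a i)
    (ha : Summable fun i => a i - 1) (hb0 : ∀ i, 0 ≤ b i) (hb : Summable b) :
    ∃ c > 0, ∀ t, 0 ≤ t → ∀ s : Finset ι, (∀ i ∈ s, 1 ≤ t * b i) →
      s.card * c ≤ ∑' i, log (a i ^ 2 + t * b i) - ∑' i, log (a i ^ 2) := by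
  obtain ⟨A, hA⟩ := ha.tendsto_cofinite_zero.bddAbove_range_of_cofinite
  set C := max (A + 1) 1
  have haC : ∀ i, a i ≤ C := fun i =>
    le_max_of_le_left (by linarith [hA (Set.mem_range_self i)])
  refine ⟨log (1 + 1 / C ^ 2), log_pos (lt_add_of_pos_right _ (by positivity)), fun t ht s hs => ?_⟩
  have hdiff : ∀ i, 0 ≤ log (a i ^ 2 + t * b i) - log (a i ^ 2) := fun i => by
    simpa using log_one_add_div_sq_le_log_sub_log (ha0 i) (haC i) le_rfl
      (mul_nonneg ht (hb0 i))
  have hsum0 : Summable fun i => log (a i ^ 2) := by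
    simpa using summable_log_sq_add_mul ha hb 0
  rw [← (summable_log_sq_add_mul ha hb t).tsum_sub hsum0, ← nsmul_eq_mul]
  calc s.card • log (1 + 1 / C ^ 2)
      ≤ ∑ i ∈ s, (log (a i ^ 2 + t * b i) - log (a i ^ 2)) :=
        card_nsmul_le_sum _ _ _ fun i hi =>
          log_one_add_div_sq_le_log_sub_log (ha0 i) (haC i) zero_le_one (hs i hi)
    _ ≤ _ := ((summable_log_sq_add_mul ha hb t).sub hsum0).sum_le_tsum _
        fun i _ => hdiff i

end LogSeries

lemma one_sub_mul_rpow_sub_one_pos {M θ γ e : ℝ} (hM : 0 < M) (hθ : M ≤ θ) (hγ : γ ≤ 1)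
    (he : e < M ^ (1 - γ)) : 0 < 1 - e * θ ^ (γ - 1) := by
  have : e * θ ^ (γ - 1) < 1 :=
    calc e * θ ^ (γ - 1) < M ^ (1 - γ) * θ ^ (γ - 1) :=
          mul_lt_mul_of_pos_right he (rpow_pos_of_pos (hM.trans_le hθ) _)
      _ ≤ M ^ (1 - γ) * M ^ (γ - 1) :=
          mul_le_mul_of_nonneg_left (rpow_le_rpow_of_nonpos hM hθ (by linarith))
            (rpow_nonneg hM.le _)
      _ = 1 := by rw [← rpow_add hM]; simp
  linarith

lemma one_le_four_mul_sq_mul_rpow_neg_two {θ ξ : ℝ} (hθ : 0 < θ) (h : θ ≤ 2 * |ξ|) :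
    1 ≤ 4 * ξ ^ 2 * θ ^ (-2 : ℝ) := by
  rw [rpow_neg hθ.le, rpow_two, ← div_eq_mul_inv, one_le_div (by positivity)]
  nlinarith [sq_abs ξ]

lemma sqrt_le_sqrt_sub_add_sqrt {x y : ℝ} (hy : 0 ≤ y) : √x ≤ √(x - y) + √y := by
  rcases le_total x y with h | h
  · exact (sqrt_le_sqrt h).trans (le_add_of_nonneg_left (sqrt_nonneg _))
  · rw [sqrt_le_left (by positivity)]
    nlinarith [sq_sqrt (sub_nonneg.2 h), sq_sqrt hy, sqrt_nonneg (x - y), sqrt_nonneg y]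

section Quadratic

variable {q M : ℝ}

lemma summable_rpow_neg_quadratic (hq : 0 < q) (hM : 0 ≤ M) {s : ℝ} (hs : 1 / 2 < s) :
    Summable fun j : ℤ => (q * j ^ 2 + M) ^ (-s) := by
  refine Summable.of_norm_bounded_eventually
    ((summable_abs_int_rpow (b := 2 * s) (by linarith)).mul_left (q ^ (-s))) ?_
  filter_upwards [eventually_cofinite_ne 0] with j hj
  have hj2 : 0 < q * (j : ℝ) ^ 2 := by positivity
  rw [Real.norm_of_nonneg (rpow_nonneg (by positivity) _)]
  calc (q * j ^ 2 + M) ^ (-s) ≤ (q * j ^ 2) ^ (-s) :=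
        rpow_le_rpow_of_nonpos hj2 (by linarith) (by linarith)
    _ = q ^ (-s) * |(j : ℝ)| ^ (-(2 * s)) := by
        rw [mul_rpow hq.le (sq_nonneg _), ← sq_abs, ← rpow_natCast, ← rpow_mul (abs_nonneg _)]
        ring_nf

lemma exists_finset_int_quadratic_le (hq : 0 < q) (hM : 0 ≤ M) (x : ℝ) :
    ∃ s : Finset ℤ, (∀ j ∈ s, q * j ^ 2 + M ≤ x) ∧ √x ≤ √q * (s.card + 1) + √M := by
  set n := ⌊√((x - M) / q)⌋₊
  refine ⟨Icc 1 (n : ℤ), fun j hj => ?_, ?_⟩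
  · obtain ⟨hj1, hjn⟩ := mem_Icc.1 hj
    have hj_le : (j : ℝ) ≤ √((x - M) / q) :=
      (Int.cast_le.2 hjn).trans (by exact_mod_cast Nat.floor_le (sqrt_nonneg _))
    have hj_sq := (le_sqrt' (by exact_mod_cast hj1)).1 hj_le
    rw [le_div_iff₀ hq] at hj_sq
    linarith
  · have hsqrt : √(x - M) = √q * √((x - M) / q) := by
      rw [← sqrt_mul hq.le, mul_div_cancel₀ _ hq.ne']
    have hcard : ((Icc 1 (n : ℤ)).card : ℝ) = n := by simp
    calc √x ≤ √(x - M) + √M := sqrt_le_sqrt_sub_add_sqrt hM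
      _ ≤ √q * (n + 1) + √M := by
        rw [hsqrt]
        gcongr
        exact (Nat.lt_floor_add_one _).le
      _ = _ := by rw [hcard]

end Quadratic

theorem log_series_summable_and_lower_bound
    (β m L γ ε : ℝ) (hβ : 0 < β) (hm : 0 < m) (hL : 0 < L)
    (hγ : γ < 1 / 2) (hε : 2 * ε < (β * m ^ 2) ^ (1 - γ)) :
    (∀ ξ : ℝ, Summable fun j : ℤ =>
        Real.log ((1 - 2 * ε * (β * ((2 * π * j / L) ^ 2 + m ^ 2)) ^ (γ - 1)) ^ 2
          + 4 * ξ ^ 2 * (β * ((2 * π * j / L) ^ 2 + m ^ 2)) ^ (-2 : ℝ))) ∧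
    ∃ K₁ K₂ : ℝ, 0 < K₂ ∧ ∀ ξ : ℝ,
      -K₁ + K₂ * Real.sqrt (max (|ξ| - 1) 0)
        ≤ (1 / 2) * ∑' j : ℤ,
            Real.log ((1 - 2 * ε * (β * ((2 * π * j / L) ^ 2 + m ^ 2)) ^ (γ - 1)) ^ 2
              + 4 * ξ ^ 2 * (β * ((2 * π * j / L) ^ 2 + m ^ 2)) ^ (-2 : ℝ)) := by
  set q := β * (2 * π / L) ^ 2
  set M := β * m ^ 2
  have hq : 0 < q := by positivity
  have hM : 0 < M := by positivity
  have hθ : ∀ j : ℤ, β * ((2 * π * j / L) ^ 2 + m ^ 2) = q * j ^ 2 + M := fun j => by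
    simp only [q, M]
    ring
  simp only [hθ]
  have hθpos : ∀ j : ℤ, 0 < q * j ^ 2 + M := fun j => by positivity
  have ha0 : ∀ j : ℤ, 0 < 1 - 2 * ε * (q * j ^ 2 + M) ^ (γ - 1) := fun j =>
    one_sub_mul_rpow_sub_one_pos hM (by nlinarith) (by linarith) hε
  have ha : Summable fun j : ℤ => 1 - 2 * ε * (q * j ^ 2 + M) ^ (γ - 1) - 1 := by
    have := (summable_rpow_neg_quadratic hq hM.le (s := 1 - γ) (by linarith)).mul_left (-(2 * ε))
    simpa only [neg_sub, sub_sub_cancel_left, neg_mul] using this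
  have hb := summable_rpow_neg_quadratic hq hM.le (s := 2) (by norm_num)
  have hb0 : ∀ j : ℤ, 0 ≤ (q * j ^ 2 + M) ^ (-2 : ℝ) := fun j => rpow_nonneg (hθpos j).le _
  refine ⟨fun ξ => summable_log_sq_add_mul ha hb _, ?_⟩
  obtain ⟨c, hc, hgrowth⟩ := exists_pos_card_mul_le_tsum_log_sub ha0 ha hb0 hb
  obtain ⟨K₂, hK₂pos, hK₂⟩ : ∃ K₂ > 0, K₂ * √q = c / 2 :=
    ⟨c / (2 * √q), by positivity, by field_simp [(sqrt_pos.2 hq).ne']⟩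
  refine ⟨-(1 / 2) * ∑' j : ℤ, log ((1 - 2 * ε * (q * j ^ 2 + M) ^ (γ - 1)) ^ 2)
    + c / 2 + K₂ * √M, K₂, hK₂pos, fun ξ => ?_⟩
  obtain ⟨s, hsθ, hs⟩ := exists_finset_int_quadratic_le hq hM.le (2 * |ξ|)
  have hS := hgrowth (4 * ξ ^ 2) (by positivity) s fun j hj =>
    one_le_four_mul_sq_mul_rpow_neg_two (hθpos j) (hsθ j hj)
  have hsqrt : K₂ * √(max (|ξ| - 1) 0) ≤ K₂ * (√q * (s.card + 1) + √M) := by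
    gcongr
    exact (sqrt_le_sqrt (max_le (by linarith [abs_nonneg ξ]) (by positivity))).trans hs
  linear_combination hsqrt + hS / 2 + (s.card + 1 : ℝ) * hK₂
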